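/- arXiv:0704.2025 — 2 statements merged into one kernel-verified Lean document; each statement's English description precedes it below -/
import Mathlib

section
/- For all integers n ≥ 1 and reals r ≥ 1, α ≥ 2, ((Σ_{i=1}^{n+1} i^r)^α − (Σ_{i=1}^{n} i^r)^α)/(n+1)^{α(r+1)-1} ≥ ((Σ_{i=1}^{n+2} i^r)^α − (Σ_{i=1}^{n+1} i^r)^α)/(n+2)^{α(r+1)-1}. -/
/-!
Write `S m = ∑_{i ≤ m} i^r`, `p = n + 1`, `q = n + 2`. Dividing by `p^{r+1}` resp. `q^{r+1}`, the
claim becomes `q (y^α - x^α) ≤ p (b^α - a^α)` for the intervals `[a, b] = [S n, S (n+1)] / p^{r+1}`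
of length `1/p` and `[x, y] = [S (n+1), S (n+2)] / q^{r+1}` of length `1/q ≤ 1/p`.

The midpoint of `[x, y]` lies to the left of that of `[a, b]`, i.e.
`(S (n+1) + S (n+2)) p^{r+1} ≤ (S n + S (n+1)) q^{r+1}`. This follows by summing over `j ≤ n` a
comparison of the trapezoidal rule for `∫ t^r` on `[j, j+1]` and on `[n+1, n+2]`: the rule
overestimates `∫_a^b t^r` by a factor that depends only on `a / b` and decreases in it, which comes
down to `r sinh x ≤ sinh (r x)`.

Given the midpoints, convexity of `t^α` lets us slide `[x, y]` to the right until the midpoints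
agree. For `α ≥ 2` the function `e ↦ (m + e)^α - (m - e)^α` is convex and vanishes at `0`, so its
slope from the origin grows with `e`, and this compares the two centred intervals.
-/

open Real Set

theorem ConvexOn.map_add_map_le {s : Set ℝ} {f : ℝ → ℝ} (hf : ConvexOn ℝ s f) {x z u v : ℝ}
    (hx : x ∈ s) (hz : z ∈ s) (hu : u ∈ Icc x z) (huv : u + v = x + z) :
    f u + f v ≤ f x + f z := by
  rcases hu.1.eq_or_lt with rfl | hxu
  · obtain rfl : v = z := by linarith
    rfl
  have hxz : 0 < z - x := by linarith [hu.2]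
  set t := (z - u) / (z - x)
  have ht0 : 0 ≤ t := div_nonneg (by linarith [hu.2]) hxz.le
  have ht1 : 0 ≤ 1 - t := by
    rw [sub_nonneg, div_le_one hxz]; linarith
  have hu' : t • x + (1 - t) • z = u := by simp only [smul_eq_mul, t]; field_simp; ring
  have hv' : (1 - t) • x + t • z = v := by
    simp only [smul_eq_mul, t]; field_simp; rw [show v = x + z - u by linarith]; ring
  have h₁ := hf.2 hx hz ht0 ht1 (by ring)
  have h₂ := hf.2 hx hz ht1 ht0 (by ring)
  rw [hu'] at h₁
  rw [hv'] at h₂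
  simp only [smul_eq_mul] at h₁ h₂
  linarith

theorem ConvexOn.mul_map_le_mul_map {s : Set ℝ} {f : ℝ → ℝ} (hf : ConvexOn ℝ s f)
    (h₀ : (0 : ℝ) ∈ s) (hf₀ : f 0 ≤ 0) {x y : ℝ} (hx : 0 ≤ x) (hxy : x ≤ y) (hy : y ∈ s) :
    y * f x ≤ x * f y := by
  rcases hx.eq_or_lt with rfl | hx
  · simp [mul_nonpos_of_nonneg_of_nonpos (hx.trans hxy) hf₀]
  have hy₀ : 0 < y := hx.trans_le hxy
  have h := hf.2 hy h₀ (div_nonneg hx.le hy₀.le) (sub_nonneg.2 ((div_le_one hy₀).2 hxy))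
    (add_sub_cancel _ _)
  rw [smul_eq_mul, smul_zero, add_zero, div_mul_cancel₀ _ hy₀.ne', smul_eq_mul, smul_eq_mul] at h
  calc y * f x ≤ y * (x / y * f y + (1 - x / y) * f 0) := mul_le_mul_of_nonneg_left h hy₀.le
    _ ≤ y * (x / y * f y) := by
        gcongr
        exact add_le_of_nonpos_right (mul_nonpos_of_nonneg_of_nonpos
          (sub_nonneg.2 ((div_le_one hy₀).2 hxy)) hf₀)
    _ = x * f y := by field_simp

theorem convexOn_sinh : ConvexOn ℝ (Ici 0) sinh := by
  refine MonotoneOn.convexOn_of_deriv (convex_Ici 0) continuous_sinh.continuousOn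
    differentiable_sinh.differentiableOn ?_
  rw [Real.deriv_sinh, interior_Ici]
  intro x hx y hy hxy
  rw [cosh_le_cosh, abs_of_pos hx, abs_of_pos hy]
  exact hxy

theorem mul_sinh_le_sinh_mul {r x : ℝ} (hr : 1 ≤ r) (hx : 0 ≤ x) : r * sinh x ≤ sinh (r * x) := by
  rcases hx.eq_or_lt with rfl | hx
  · simp
  have h := convexOn_sinh.mul_map_le_mul_map self_mem_Ici sinh_zero.le hx.le
    (le_mul_of_one_le_left hx.le hr) (mem_Ici.2 (by positivity))
  exact le_of_mul_le_mul_left (by linarith) hx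

theorem mul_rpow_sub_one_mul_one_sub_sq_le {r t : ℝ} (hr : 1 ≤ r) (ht₀ : 0 < t) (ht₁ : t ≤ 1) :
    r * t ^ (r - 1) * (1 - t ^ 2) ≤ 1 - (t ^ r) ^ 2 := by
  have h := mul_sinh_le_sinh_mul hr (neg_nonneg.2 (log_nonpos ht₀.le ht₁))
  have hE : exp (r * log t) = t ^ r := by rw [mul_comm, ← rpow_def_of_pos ht₀]
  rw [sinh_eq, sinh_eq, neg_neg, exp_neg, exp_log ht₀, mul_neg, neg_neg, exp_neg, hE] at h
  rw [rpow_sub_one ht₀.ne']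
  field_simp at h ⊢
  linarith

-- `2 / (r + 1)` times the ratio of the trapezoidal rule to `∫_a^b t^r dt`.
noncomputable def trapezoidRatio (r a b : ℝ) : ℝ :=
  (b - a) * (b ^ r + a ^ r) / (b ^ (r + 1) - a ^ (r + 1))

theorem trapezoidRatio_mul_mul {r s a b : ℝ} (hs : 0 < s) (ha : 0 ≤ a) (hb : 0 ≤ b) :
    trapezoidRatio r (s * a) (s * b) = trapezoidRatio r a b := by
  have hsr : s ^ (r + 1) = s * s ^ r := by rw [rpow_add_one hs.ne', mul_comm]
  simp only [trapezoidRatio, mul_rpow hs.le ha, mul_rpow hs.le hb]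
  rw [← mul_sub, ← mul_add, ← mul_sub, hsr, mul_mul_mul_comm,
    mul_div_mul_left _ _ (by positivity)]

theorem hasDerivAt_trapezoidRatio_one {r t : ℝ} (hr : 1 ≤ r) (ht₀ : 0 ≤ t) (ht₁ : t < 1) :
    HasDerivAt (fun t => trapezoidRatio r t 1)
      ((r * t ^ (r - 1) * (1 - t ^ 2) - (1 - (t ^ r) ^ 2)) / (1 - t ^ (r + 1)) ^ 2) t := by
  have hnum : HasDerivAt (fun t : ℝ => (1 - t) * (1 + t ^ r))
      (-1 * (1 + t ^ r) + (1 - t) * (r * t ^ (r - 1))) t :=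
    ((hasDerivAt_id t).const_sub 1).mul ((hasDerivAt_rpow_const (Or.inr hr)).const_add 1)
  have hden : HasDerivAt (fun t : ℝ => 1 - t ^ (r + 1)) (-((r + 1) * t ^ r)) t := by
    simpa using (hasDerivAt_rpow_const (x := t) (Or.inr (by linarith : 1 ≤ r + 1))).const_sub 1
  have hne : 1 - t ^ (r + 1) ≠ 0 :=
    (sub_pos.2 (rpow_lt_one ht₀ ht₁ (by linarith))).ne'
  have hr₁ : t ^ r = t ^ (r - 1) * t := by
    rw [← rpow_add_one' ht₀ (by linarith), sub_add_cancel]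
  have hr₂ : t ^ (r + 1) = t ^ (r - 1) * t ^ 2 := by
    rw [rpow_add_one' ht₀ (by linarith), hr₁]; ring
  have hfun : (fun t => trapezoidRatio r t 1) =
      fun t => (1 - t) * (1 + t ^ r) / (1 - t ^ (r + 1)) := by
    funext t; simp [trapezoidRatio]
  rw [hfun]
  refine (hnum.div hden hne).congr_deriv ?_
  rw [hr₂, hr₁]; ring

theorem antitoneOn_trapezoidRatio_one {r : ℝ} (hr : 1 ≤ r) :
    AntitoneOn (fun t => trapezoidRatio r t 1) (Ico 0 1) := by
  have hderiv : ∀ t ∈ Ico (0 : ℝ) 1, HasDerivAt (fun t => trapezoidRatio r t 1) _ t :=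
    fun t ht => hasDerivAt_trapezoidRatio_one hr ht.1 ht.2
  refine antitoneOn_of_deriv_nonpos (convex_Ico 0 1)
    (fun t ht => (hderiv t ht).continuousAt.continuousWithinAt)
    (fun t ht => (hderiv t (interior_subset ht)).differentiableAt.differentiableWithinAt)
    (fun t ht => ?_)
  rw [interior_Ico] at ht
  rw [(hderiv t (Ioo_subset_Ico_self ht)).deriv]
  exact div_nonpos_of_nonpos_of_nonneg
    (sub_nonpos.2 (mul_rpow_sub_one_mul_one_sub_sq_le hr ht.1 ht.2.le)) (sq_nonneg _)

theorem trapezoidRatio_le_of_div_le {r a b c d : ℝ} (hr : 1 ≤ r) (ha : 0 ≤ a) (hab : a < b)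
    (hc : 0 ≤ c) (hcd : c < d) (h : a / b ≤ c / d) :
    trapezoidRatio r c d ≤ trapezoidRatio r a b := by
  have hb : 0 < b := ha.trans_lt hab
  have hd : 0 < d := hc.trans_lt hcd
  have hnorm : ∀ {x y : ℝ}, 0 ≤ x → 0 < y → trapezoidRatio r x y = trapezoidRatio r (x / y) 1 :=
    fun {x y} hx hy => by
      rw [← trapezoidRatio_mul_mul hy (div_nonneg hx hy.le) zero_le_one, mul_div_cancel₀ _ hy.ne',
        mul_one]
  rw [hnorm ha hb, hnorm hc hd]
  exact antitoneOn_trapezoidRatio_one hr ⟨div_nonneg ha hb.le, (div_lt_one hb).2 hab⟩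
    ⟨div_nonneg hc hd.le, (div_lt_one hd).2 hcd⟩ h

noncomputable def powerSum (r : ℝ) (m : ℕ) : ℝ := ∑ i ∈ Finset.Icc 1 m, (i : ℝ) ^ r

@[simp]
theorem powerSum_zero (r : ℝ) : powerSum r 0 = 0 := rfl

theorem powerSum_succ (r : ℝ) (m : ℕ) : powerSum r (m + 1) = powerSum r m + ((m : ℝ) + 1) ^ r := by
  rw [powerSum, Finset.sum_Icc_succ_top (by omega), Nat.cast_succ, powerSum]

theorem powerSum_nonneg (r : ℝ) (m : ℕ) : 0 ≤ powerSum r m :=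
  Finset.sum_nonneg fun i _ => rpow_nonneg i.cast_nonneg r

-- `2 * powerSum r m - m ^ r` is twice the trapezoidal sum for `∫_0^m t^r dt` with unit steps.
theorem trapezoid_powerSum_le {r c : ℝ} (hr : 1 ≤ r) (hc : 0 ≤ c) :
    ∀ m : ℕ, (m : ℝ) ≤ c + 1 →
      ((c + 1) ^ r + c ^ r) * (m : ℝ) ^ (r + 1) ≤
        (2 * powerSum r m - (m : ℝ) ^ r) * ((c + 1) ^ (r + 1) - c ^ (r + 1))
  | 0, _ => by simp [zero_rpow (by linarith : r ≠ 0), zero_rpow (by linarith : r + 1 ≠ 0)]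
  | m + 1, hm => by
    have hm' : (m : ℝ) ≤ c := by push_cast at hm; linarith
    have ih := trapezoid_powerSum_le hr hc m (by linarith)
    have hpos : ∀ x : ℝ, 0 ≤ x → 0 < (x + 1) ^ (r + 1) - x ^ (r + 1) := fun x hx =>
      sub_pos.2 (rpow_lt_rpow hx (lt_add_one x) (by linarith))
    have step := trapezoidRatio_le_of_div_le hr m.cast_nonneg (lt_add_one (m : ℝ)) hc
      (lt_add_one c) ((div_le_div_iff₀ (by positivity) (by positivity)).2 (by nlinarith))
    rw [trapezoidRatio, trapezoidRatio, div_le_div_iff₀ (hpos c hc) (hpos m m.cast_nonneg)] at step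
    rw [powerSum_succ, Nat.cast_succ]
    linear_combination ih + step

theorem powerSum_add_two (r : ℝ) (n : ℕ) :
    powerSum r (n + 2) = powerSum r (n + 1) + ((n : ℝ) + 2) ^ r := by
  rw [powerSum_succ]; push_cast; ring_nf

theorem powerSum_add_mul_le {r : ℝ} (hr : 1 ≤ r) (n : ℕ) :
    (powerSum r (n + 1) + powerSum r (n + 2)) * ((n : ℝ) + 1) ^ (r + 1) ≤
      (powerSum r n + powerSum r (n + 1)) * ((n : ℝ) + 2) ^ (r + 1) := by
  have h := trapezoid_powerSum_le hr (c := (n : ℝ) + 1) (by positivity) (n + 1)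
    (by push_cast; linarith)
  rw [Nat.cast_succ, add_assoc, one_add_one_eq_two] at h
  have h₁ := powerSum_succ r n
  have h₂ := powerSum_add_two r n
  linear_combination h + ((n : ℝ) + 1) ^ (r + 1) * h₂ + ((n : ℝ) + 2) ^ (r + 1) * h₁

theorem convexOn_rpow_add_sub_rpow_sub {α m : ℝ} (hα : 2 ≤ α) :
    ConvexOn ℝ (Icc 0 m) fun e => (m + e) ^ α - (m - e) ^ α := by
  have hα₁ : 1 ≤ α := by linarith
  have hderiv : ∀ e : ℝ, HasDerivAt (fun e => (m + e) ^ α - (m - e) ^ α)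
      (α * ((m + e) ^ (α - 1) + (m - e) ^ (α - 1))) e := fun e =>
    ((((hasDerivAt_id' e).const_add m).rpow_const (Or.inr hα₁)).sub
      (((hasDerivAt_id' e).const_sub m).rpow_const (Or.inr hα₁))).congr_deriv (by ring)
  refine MonotoneOn.convexOn_of_deriv (convex_Icc 0 m)
    (fun e _ => (hderiv e).continuousAt.continuousWithinAt)
    (fun e _ => (hderiv e).differentiableAt.differentiableWithinAt) ?_
  rw [interior_Icc]
  rintro a ⟨ha₀, -⟩ b ⟨hb₀, hbm⟩ hab
  rw [(hderiv a).deriv, (hderiv b).deriv]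
  gcongr α * ?_
  have := (convexOn_rpow (by linarith : 1 ≤ α - 1)).map_add_map_le (x := m - b) (z := m + b)
    (u := m + a) (v := m - a) (mem_Ici.2 (by linarith)) (mem_Ici.2 (by linarith))
    ⟨by linarith, by linarith⟩ (by ring)
  linarith

theorem mul_rpow_add_sub_rpow_sub_le {α m e e' : ℝ} (hα : 2 ≤ α) (he' : 0 ≤ e') (hee' : e' ≤ e)
    (hem : e ≤ m) :
    e * ((m + e') ^ α - (m - e') ^ α) ≤ e' * ((m + e) ^ α - (m - e) ^ α) :=
  (convexOn_rpow_add_sub_rpow_sub hα).mul_map_le_mul_map ⟨le_rfl, he'.trans (hee'.trans hem)⟩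
    (by simp) he' hee' ⟨he'.trans hee', hem⟩

theorem mul_rpow_sub_rpow_le_of_add_le {α p q a b x y : ℝ} (hα : 2 ≤ α) (hp : 0 < p)
    (hpq : p ≤ q) (ha : 0 ≤ a) (hx : 0 ≤ x) (hba : b - a = 1 / p) (hyx : y - x = 1 / q)
    (hxy : x + y ≤ a + b) :
    q * (y ^ α - x ^ α) ≤ p * (b ^ α - a ^ α) := by
  obtain ⟨m, e, rfl, rfl⟩ : ∃ m e, a = m - e ∧ b = m + e :=
    ⟨(a + b) / 2, (b - a) / 2, by ring, by ring⟩
  obtain ⟨m', e', rfl, rfl⟩ : ∃ m e, x = m - e ∧ y = m + e :=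
    ⟨(x + y) / 2, (y - x) / 2, by ring, by ring⟩
  have hq : 0 < q := hp.trans_le hpq
  have hpe : 2 * p * e = 1 := by field_simp at hba; linarith
  have hqe' : 2 * q * e' = 1 := by field_simp at hyx; linarith
  have he' : 0 ≤ e' := by nlinarith
  have hee' : e' ≤ e := by nlinarith
  have htranslate := (convexOn_rpow (by linarith : 1 ≤ α)).map_add_map_le
    (x := m' - e') (z := m + e') (u := m' + e') (v := m - e') (mem_Ici.2 hx)
    (mem_Ici.2 (by linarith)) ⟨by linarith, by linarith⟩ (by ring)
  have hslope := mul_rpow_add_sub_rpow_sub_le (m := m) hα he' hee' (by linarith)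
  calc q * ((m' + e') ^ α - (m' - e') ^ α)
      ≤ q * ((m + e') ^ α - (m - e') ^ α) := by gcongr q * ?_; linarith
    _ = 2 * p * q * (e * ((m + e') ^ α - (m - e') ^ α)) := by
        linear_combination (-q * ((m + e') ^ α - (m - e') ^ α)) * hpe
    _ ≤ 2 * p * q * (e' * ((m + e) ^ α - (m - e) ^ α)) := by gcongr
    _ = p * ((m + e) ^ α - (m - e) ^ α) := by
        linear_combination (p * ((m + e) ^ α - (m - e) ^ α)) * hqe'

theorem add_rpow_div_rpow_add_one {r w : ℝ} (hw : 0 < w) (S : ℝ) :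
    (S + w ^ r) / w ^ (r + 1) = S / w ^ (r + 1) + 1 / w := by
  rw [rpow_add_one hw.ne']
  field_simp

theorem rpow_sub_rpow_div_rpow_eq {α r w X Y : ℝ} (hw : 0 < w) (hX : 0 ≤ X) (hY : 0 ≤ Y) :
    (Y ^ α - X ^ α) / w ^ (α * (r + 1) - 1) =
      w * ((Y / w ^ (r + 1)) ^ α - (X / w ^ (r + 1)) ^ α) := by
  have hW : 0 < w ^ (r + 1) := rpow_pos_of_pos hw _
  rw [div_rpow hY hW.le, div_rpow hX hW.le, ← rpow_mul hw.le, rpow_sub_one hw.ne',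
    mul_comm (r + 1)]
  field_simp

theorem stmt_14_general (n : ℕ) (r α : ℝ) (hr : 1 ≤ r) (hα : 2 ≤ α) :
    ((∑ i ∈ Finset.Icc 1 (n + 2), (i : ℝ) ^ r) ^ α -
        (∑ i ∈ Finset.Icc 1 (n + 1), (i : ℝ) ^ r) ^ α) / (n + 2 : ℝ) ^ (α * (r + 1) - 1) ≤
    ((∑ i ∈ Finset.Icc 1 (n + 1), (i : ℝ) ^ r) ^ α -
        (∑ i ∈ Finset.Icc 1 n, (i : ℝ) ^ r) ^ α) / (n + 1 : ℝ) ^ (α * (r + 1) - 1) := by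
  change (powerSum r (n + 2) ^ α - powerSum r (n + 1) ^ α) / _ ≤
    (powerSum r (n + 1) ^ α - powerSum r n ^ α) / _
  have hp : (0 : ℝ) < n + 1 := by positivity
  have hq : (0 : ℝ) < n + 2 := by positivity
  have hS : ∀ m (w : ℝ), 0 < w → 0 ≤ powerSum r m / w ^ (r + 1) := fun m w hw =>
    div_nonneg (powerSum_nonneg r m) (rpow_pos_of_pos hw _).le
  rw [rpow_sub_rpow_div_rpow_eq hq (powerSum_nonneg r _) (powerSum_nonneg r _),
    rpow_sub_rpow_div_rpow_eq hp (powerSum_nonneg r _) (powerSum_nonneg r _)]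
  refine mul_rpow_sub_rpow_le_of_add_le hα hp (by linarith) (hS n _ hp) (hS (n + 1) _ hq) ?_ ?_ ?_
  · rw [powerSum_succ, add_rpow_div_rpow_add_one hp]; ring
  · rw [powerSum_add_two, add_rpow_div_rpow_add_one hq]; ring
  · rw [← add_div, ← add_div, div_le_div_iff₀ (rpow_pos_of_pos hq _)
      (rpow_pos_of_pos hp _)]
    exact powerSum_add_mul_le hr n

theorem stmt_14 (n : ℕ) (hn : 1 ≤ n) (r α : ℝ) (hr : 1 ≤ r) (hα : 2 ≤ α) :
    ((∑ i ∈ Finset.Icc 1 (n + 2), (i : ℝ) ^ r) ^ α -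
        (∑ i ∈ Finset.Icc 1 (n + 1), (i : ℝ) ^ r) ^ α) / (n + 2 : ℝ) ^ (α * (r + 1) - 1) ≤
    ((∑ i ∈ Finset.Icc 1 (n + 1), (i : ℝ) ^ r) ^ α -
        (∑ i ∈ Finset.Icc 1 n, (i : ℝ) ^ r) ^ α) / (n + 1 : ℝ) ^ (α * (r + 1) - 1) :=
  stmt_14_general n r α hr hα
end

section
/- (Alzer's inequality) For every integer n ≥ 1 and real r > 0, n/(n+1) < ((1/n)Σ_{i=1}^n i^r / ((1/(n+1))Σ_{i=1}^{n+1} i^r))^{1/r}. -/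
open Finset Real

/-!
Write `S n = ∑_{i ≤ n} i ^ r`; the inequality is equivalent to
`S (n + 1) / (n + 1) ^ (r + 1) < S n / n ^ (r + 1)`. Telescoping
`n ^ (r + 1) = ∑_{k < n} ((k + 1) ^ (r + 1) - k ^ (r + 1))` exhibits `S n / n ^ (r + 1)` as a
weighted mean of the ratios `q k = (k + 1) ^ r / ((k + 1) ^ (r + 1) - k ^ (r + 1))`, and appending
a term smaller than all previous ones lowers a weighted mean. The ratios do decrease: with
`u = k / (k + 1)`, `1 / q k = (1 - u ^ (r + 1)) / (1 - u)` is the slope of a secant through `1` of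
the strictly convex function `u ↦ u ^ (r + 1)`, and `u` increases with `k`.
-/

theorem sum_div_sum_range_succ_lt {a w : ℕ → ℝ} (hw : ∀ k, 0 < w k)
    (haw : StrictAnti fun k => a k / w k) {n : ℕ} (hn : n ≠ 0) :
    (∑ k ∈ range (n + 1), a k) / ∑ k ∈ range (n + 1), w k <
      (∑ k ∈ range n, a k) / ∑ k ∈ range n, w k := by
  set A := ∑ k ∈ range n, a k
  set W := ∑ k ∈ range n, w k
  have hW : 0 < W := sum_pos (fun k _ => hw k) (nonempty_range_iff.mpr hn)
  have hlast : a n / w n * W < A := by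
    rw [mul_sum]
    refine sum_lt_sum_of_nonempty (nonempty_range_iff.mpr hn) fun k hk => ?_
    calc a n / w n * w k < a k / w k * w k :=
          mul_lt_mul_of_pos_right (haw (mem_range.mp hk)) (hw k)
      _ = a k := div_mul_cancel₀ _ (hw k).ne'
  rw [div_mul_eq_mul_div, div_lt_iff₀ (hw n)] at hlast
  rw [sum_range_succ, sum_range_succ, div_lt_div_iff₀ (by linarith [hw n]) hW]
  linarith

theorem strictMonoOn_rpow_sub_one_div_sub_one {p : ℝ} (hp : 1 < p) :
    StrictMonoOn (fun u : ℝ => (u ^ p - 1) / (u - 1)) (Set.Ici 0 \ {1}) := by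
  intro x hx y hy hxy
  simpa using (strictConvexOn_rpow hp).secant_strict_mono (a := 1) (by simp) hx.1 hy.1 hx.2 hy.2 hxy

theorem rpow_div_succ_rpow_sub_rpow_eq {x : ℝ} (hx : 0 ≤ x) (r : ℝ) :
    (x + 1) ^ r / ((x + 1) ^ (r + 1) - x ^ (r + 1)) =
      (((x / (x + 1)) ^ (r + 1) - 1) / (x / (x + 1) - 1))⁻¹ := by
  have hx1 : 0 < x + 1 := by linarith
  rw [inv_div, div_rpow hx hx1.le, rpow_add_one hx1.ne']
  field_simp
  rw [show x - (x + 1) = -1 by ring, neg_div, ← div_neg, neg_sub]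

theorem strictAnti_succ_rpow_div_succ_rpow_sub_rpow {r : ℝ} (hr : 0 < r) :
    StrictAnti fun k : ℕ =>
      ((k : ℝ) + 1) ^ r / (((k : ℝ) + 1) ^ (r + 1) - (k : ℝ) ^ (r + 1)) := by
  intro j k hjk
  simp only [rpow_div_succ_rpow_sub_rpow_eq (Nat.cast_nonneg _)]
  have hlt_one (m : ℕ) : (m : ℝ) / (m + 1) < 1 :=
    (div_lt_one (by positivity)).mpr (lt_add_one _)
  have hmem (m : ℕ) : (m : ℝ) / (m + 1) ∈ Set.Ici 0 \ {1} :=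
    ⟨Set.mem_Ici.mpr (by positivity), (hlt_one m).ne⟩
  have hujk : (j : ℝ) / (j + 1) < k / (k + 1) := by
    rw [div_lt_div_iff₀ (by positivity) (by positivity)]
    have : (j : ℝ) < k := by exact_mod_cast hjk
    linarith
  have hslope :=
    strictMonoOn_rpow_sub_one_div_sub_one (by linarith : 1 < r + 1) (hmem j) (hmem k) hujk
  have hslope_pos : 0 < (((j : ℝ) / (j + 1)) ^ (r + 1) - 1) / ((j : ℝ) / (j + 1) - 1) :=
    div_pos_of_neg_of_neg
      (by linarith [rpow_lt_one (hmem j).1 (hlt_one j) (by linarith : 0 < r + 1)])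
      (by linarith [hlt_one j])
  exact (inv_lt_inv₀ (hslope_pos.trans hslope) hslope_pos).mpr hslope

theorem sum_range_succ_rpow_sub_rpow {p : ℝ} (hp : p ≠ 0) (n : ℕ) :
    ∑ k ∈ range n, (((k : ℝ) + 1) ^ p - (k : ℝ) ^ p) = (n : ℝ) ^ p := by
  simpa [zero_rpow hp] using sum_range_sub (fun k : ℕ => (k : ℝ) ^ p) n

theorem sum_Icc_one_eq_sum_range {M : Type*} [AddCommMonoid M] (f : ℕ → M) (n : ℕ) :
    ∑ i ∈ Icc 1 n, f i = ∑ k ∈ range n, f (k + 1) := by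
  rw [← Ico_add_one_right_eq_Icc, sum_Ico_eq_sum_range]
  simp [add_comm]

theorem sum_rpow_div_rpow_succ_lt {r : ℝ} (hr : 0 < r) {n : ℕ} (hn : n ≠ 0) :
    (∑ i ∈ Icc 1 (n + 1), (i : ℝ) ^ r) / ((n : ℝ) + 1) ^ (r + 1) <
      (∑ i ∈ Icc 1 n, (i : ℝ) ^ r) / (n : ℝ) ^ (r + 1) := by
  have hw : ∀ k : ℕ, 0 < ((k : ℝ) + 1) ^ (r + 1) - (k : ℝ) ^ (r + 1) := fun k =>
    sub_pos.mpr (rpow_lt_rpow (by positivity) (lt_add_one _) (by linarith))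
  have := sum_div_sum_range_succ_lt hw (strictAnti_succ_rpow_div_succ_rpow_sub_rpow hr) hn
  simp only [sum_range_succ_rpow_sub_rpow (by linarith : r + 1 ≠ 0)] at this
  simpa [sum_Icc_one_eq_sum_range] using this

theorem stmt_16 (n : ℕ) (hn : 1 ≤ n) (r : ℝ) (hr : 0 < r) :
    (n : ℝ) / (n + 1) <
      (((∑ i ∈ Finset.Icc 1 n, (i : ℝ) ^ r) / n) /
        ((∑ i ∈ Finset.Icc 1 (n + 1), (i : ℝ) ^ r) / (n + 1))) ^ (1 / r) := by
  have hdecr := sum_rpow_div_rpow_succ_lt hr (by omega : n ≠ 0)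
  set S := ∑ i ∈ Icc 1 n, (i : ℝ) ^ r
  set T := ∑ i ∈ Icc 1 (n + 1), (i : ℝ) ^ r
  have hn0 : (0 : ℝ) < n := by exact_mod_cast hn
  have hT : 0 < T := sum_pos (fun i hi => rpow_pos_of_pos (by
    exact_mod_cast (mem_Icc.mp hi).1) r) ⟨1, by simp⟩
  have hsplit : S / n / (T / (n + 1)) =
      (S / (n : ℝ) ^ (r + 1)) / (T / ((n : ℝ) + 1) ^ (r + 1)) * ((n : ℝ) / (n + 1)) ^ r := by
    rw [div_rpow hn0.le (by positivity), rpow_add_one hn0.ne', rpow_add_one (by positivity)]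
    field_simp
  rw [one_div, lt_rpow_inv_iff_of_pos (by positivity) (by positivity) hr, hsplit]
  exact lt_mul_of_one_lt_left (by positivity) ((one_lt_div (by positivity)).mpr hdecr)
end
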